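/- Let graphs G₁ and G₂ with distinguished vertices be combined in series (identifying t₁ of G₁ with s₂ of G₂; s = s₁, t = t₂). Then s and t are connected in the combined graph if and only if s₁,t₁ are connected in G₁ and s₂,t₂ are connected in G₂. -/

import Mathlib

/-- The disjoint union of two graphs, on the sum of their vertex types. -/
def disjUnion {V₁ V₂ : Type*} (G₁ : SimpleGraph V₁) (G₂ : SimpleGraph V₂) :
    SimpleGraph (V₁ ⊕ V₂) where
  Adj a b :=
    match a, b with
    | Sum.inl x, Sum.inl y => G₁.Adj x y
    | Sum.inr x, Sum.inr y => G₂.Adj x y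
    | _, _ => False
  symm := by
    refine ⟨?_⟩
    rintro (x | x) (y | y) h <;> simp_all <;> exact h.symm
  loopless := by
    refine ⟨?_⟩
    rintro (x | x) h <;> simp_all

/-- The graph obtained from gluing the disjoint union of `G₁` and `G₂` along the
identifications given by the relation `r` on vertices: the image of the disjoint union
under the quotient map `Quot.mk r`. -/
def glueGraph {V₁ V₂ : Type*} (G₁ : SimpleGraph V₁) (G₂ : SimpleGraph V₂)
    (r : V₁ ⊕ V₂ → V₁ ⊕ V₂ → Prop) : SimpleGraph (Quot r) :=
  SimpleGraph.fromRel (fun x y =>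
    ∃ a b : V₁ ⊕ V₂, (disjUnion G₁ G₂).Adj a b ∧ x = Quot.mk r a ∧ y = Quot.mk r b)

/-- The identification for the series combination: `t₁` with `s₂`. -/
def seriesRel {V₁ V₂ : Type*} (t₁ : V₁) (s₂ : V₂) :
    V₁ ⊕ V₂ → V₁ ⊕ V₂ → Prop := fun a b =>
  a = Sum.inl t₁ ∧ b = Sum.inr s₂

/-! Walks in `G₁` and `G₂` map into the combined graph and meet at the glued vertex. Conversely,
"reachable from `s₁` in `G₁`" on the left and "`t₁` reachable from `s₁` in `G₁` and reachable
from `s₂` in `G₂`" on the right is closed under adjacency in the disjoint union and agrees on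
`t₁` and `s₂`, so it descends to an invariant of walks in the combined graph. -/

namespace SimpleGraph

variable {V W : Type*} {G : SimpleGraph V}

theorem Reachable.of_adj_reachable {H : SimpleGraph W} (f : V → W)
    (hf : ∀ a b, G.Adj a b → H.Reachable (f a) (f b)) {x y : V} (h : G.Reachable x y) :
    H.Reachable (f x) (f y) := by
  rw [reachable_iff_reflTransGen] at h ⊢
  exact h.lift' f fun a b hab => (reachable_iff_reflTransGen _ _).mp (hf a b hab)

theorem Reachable.imp_of_adj_imp (P : V → Prop) (hP : ∀ a b, G.Adj a b → P a → P b)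
    {x y : V} (h : G.Reachable x y) : P x → P y := by
  rw [reachable_iff_reflTransGen] at h
  induction h with
  | refl => exact id
  | tail _ hab ih => exact hP _ _ hab ∘ ih

end SimpleGraph

open SimpleGraph

section DisjUnion

variable {V₁ V₂ : Type*} (G₁ : SimpleGraph V₁) (G₂ : SimpleGraph V₂)

def disjUnion.inl : G₁ →g disjUnion G₁ G₂ where
  toFun := Sum.inl
  map_rel' := id

def disjUnion.inr : G₂ →g disjUnion G₁ G₂ where
  toFun := Sum.inr
  map_rel' := id

end DisjUnion

section GlueGraph

variable {V₁ V₂ : Type*} {G₁ : SimpleGraph V₁} {G₂ : SimpleGraph V₂}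
  {r : V₁ ⊕ V₂ → V₁ ⊕ V₂ → Prop}

theorem glueGraph_adj_iff {u v : Quot r} :
    (glueGraph G₁ G₂ r).Adj u v ↔
      u ≠ v ∧ ∃ a b, (disjUnion G₁ G₂).Adj a b ∧ u = Quot.mk r a ∧ v = Quot.mk r b := by
  refine ⟨?_, fun ⟨hne, hab⟩ => ⟨hne, .inl hab⟩⟩
  rintro ⟨hne, hab | ⟨a, b, hab, rfl, rfl⟩⟩
  · exact ⟨hne, hab⟩
  · exact ⟨hne, b, a, hab.symm, rfl, rfl⟩

theorem glueGraph_reachable_of_adj {a b : V₁ ⊕ V₂} (hab : (disjUnion G₁ G₂).Adj a b) :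
    (glueGraph G₁ G₂ r).Reachable (Quot.mk r a) (Quot.mk r b) := by
  by_cases heq : Quot.mk r a = Quot.mk r b
  · exact heq ▸ Reachable.refl _
  · exact (glueGraph_adj_iff.mpr ⟨heq, a, b, hab, rfl, rfl⟩).reachable

theorem SimpleGraph.Reachable.glue {a b : V₁ ⊕ V₂} (h : (disjUnion G₁ G₂).Reachable a b) :
    (glueGraph G₁ G₂ r).Reachable (Quot.mk r a) (Quot.mk r b) :=
  h.of_adj_reachable _ fun _ _ => glueGraph_reachable_of_adj

theorem glueGraph_reachable_imp (P : V₁ ⊕ V₂ → Prop)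
    (hadj : ∀ a b, (disjUnion G₁ G₂).Adj a b → P a → P b) (hr : ∀ a b, r a b → (P a ↔ P b))
    {a b : V₁ ⊕ V₂} (h : (glueGraph G₁ G₂ r).Reachable (Quot.mk r a) (Quot.mk r b)) :
    P a → P b := by
  let Q : Quot r → Prop := Quot.lift P fun a b hab => propext (hr a b hab)
  refine h.imp_of_adj_imp Q ?_
  intro u v huv
  obtain ⟨-, a, b, hab, rfl, rfl⟩ := glueGraph_adj_iff.mp huv
  exact hadj a b hab

end GlueGraph

/-- Series combination: identifying `t₁` of `G₁` with `s₂` of `G₂`, the combined graph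
connects `s = s₁` to `t = t₂` iff `s₁, t₁` are connected in `G₁` and `s₂, t₂` are
connected in `G₂`. -/
theorem series_reachable_iff {V₁ V₂ : Type*} (G₁ : SimpleGraph V₁) (G₂ : SimpleGraph V₂)
    (s₁ t₁ : V₁) (s₂ t₂ : V₂) :
    (glueGraph G₁ G₂ (seriesRel t₁ s₂)).Reachable
        (Quot.mk _ (Sum.inl s₁)) (Quot.mk _ (Sum.inr t₂)) ↔
      G₁.Reachable s₁ t₁ ∧ G₂.Reachable s₂ t₂ := by
  constructor
  · let P : V₁ ⊕ V₂ → Prop :=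
      Sum.elim (G₁.Reachable s₁) fun y => G₁.Reachable s₁ t₁ ∧ G₂.Reachable s₂ y
    refine fun h => glueGraph_reachable_imp P ?_ ?_ h (Reachable.refl s₁)
    · rintro (x | x) (y | y) hxy hx
      exacts [hx.trans (Adj.reachable (G := G₁) hxy), hxy.elim, hxy.elim,
        ⟨hx.1, hx.2.trans (Adj.reachable (G := G₂) hxy)⟩]
    · rintro a b ⟨rfl, rfl⟩
      simp [P]
  · rintro ⟨h₁, h₂⟩
    have hglue : Quot.mk (seriesRel t₁ s₂) (Sum.inl t₁) = Quot.mk _ (Sum.inr s₂) :=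
      Quot.sound ⟨rfl, rfl⟩
    exact (h₁.map (disjUnion.inl G₁ G₂)).glue.trans (hglue ▸ (h₂.map (disjUnion.inr G₁ G₂)).glue)
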